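/- For u ∈ ℤ and τ in the upper half-plane, g_{0,u/20}(τ/20) = 20·Σ_{v=0}^{19} ζ₂₀^{uv}·g_{v/20,0}(20τ) = 40i·Σ_{v=1}^{9} sin(πuv/10)·g_{v/20,0}(20τ), where ζ₂₀ = e^{2πi/20} and g_{s,t}(τ) = Σ_{ν∈ℤ+s} ν·e^{πiν²τ}·e^{2πiνt}. -/

import Mathlib

/-!
Writing `n = N (m + v / N)` with `0 ≤ v < N` splits the series for `g_{0,u/N}(τ/N)` into the `N`
series `g_{v/N,0}(Nτ)`, weighted by `ζ_N^{uv}` because `e^{2πi m u} = 1`. For `N = 2M` the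
symmetries `g_{s+1,t} = g_{s,t}` and `g_{-s,-t} = -g_{s,t}` give `g_{1-s,0} = -g_{s,0}`: the terms
`v = 0` and `v = M` vanish, and the terms `v` and `N - v` combine to
`(ζ_N^{uv} - ζ_N^{-uv}) g_{v/N,0} = 2i sin(2πuv/N) g_{v/N,0}`.
-/

open Complex

/-- The unary theta series `g_{s,t}(τ) = Σ_{ν∈ℤ+s} ν e^{πiν²τ} e^{2πiνt}`. -/
noncomputable def unaryTheta (s t : ℝ) (τ : ℂ) : ℂ :=
  ∑' n : ℤ, ((n : ℂ) + s) * Complex.exp (Real.pi * Complex.I * ((n : ℂ) + s)^2 * τ) *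
    Complex.exp (2 * Real.pi * Complex.I * ((n : ℂ) + s) * t)

open Real

noncomputable def unaryThetaTerm (s t : ℝ) (τ : ℂ) (n : ℤ) : ℂ :=
  ((n : ℂ) + s) * cexp (π * I * ((n : ℂ) + s) ^ 2 * τ) *
    cexp (2 * π * I * ((n : ℂ) + s) * t)

lemma unaryTheta_eq_tsum (s t : ℝ) (τ : ℂ) :
    unaryTheta s t τ = ∑' n, unaryThetaTerm s t τ n :=
  rfl

/-- Summability is inherited from Mathlib's Jacobi theta series and its `z`-derivative. -/
lemma unaryThetaTerm_eq_exp_mul_jacobiTheta₂_term (s t : ℝ) (τ : ℂ) (n : ℤ) :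
    unaryThetaTerm s t τ n = cexp (π * I * s ^ 2 * τ + 2 * π * I * s * t) *
      ((2 * π * I)⁻¹ * jacobiTheta₂'_term n (s * τ + t) τ +
        s * jacobiTheta₂_term n (s * τ + t) τ) := by
  have h2πI : (2 * π * I : ℂ) ≠ 0 := by simp [pi_ne_zero]
  rw [unaryThetaTerm, jacobiTheta₂'_term, mul_assoc (2 * π * I : ℂ) (n : ℂ),
    inv_mul_cancel_left₀ h2πI, ← add_mul, mul_assoc, ← Complex.exp_add, mul_left_comm,
    jacobiTheta₂_term, ← Complex.exp_add]
  congr 2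
  ring

lemma summable_unaryThetaTerm (s t : ℝ) {τ : ℂ} (hτ : 0 < τ.im) :
    Summable (unaryThetaTerm s t τ) := by
  exact (((((summable_jacobiTheta₂'_term_iff _ _).2 hτ).mul_left _).add
    (((summable_jacobiTheta₂_term_iff _ _).2 hτ).mul_left _)).mul_left _).congr
    fun n => (unaryThetaTerm_eq_exp_mul_jacobiTheta₂_term s t τ n).symm

lemma unaryTheta_neg (s t : ℝ) (τ : ℂ) : unaryTheta (-s) (-t) τ = -unaryTheta s t τ := by
  rw [unaryTheta_eq_tsum, unaryTheta_eq_tsum, ← tsum_neg, ← (Equiv.neg ℤ).tsum_eq]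
  refine tsum_congr fun n => ?_
  simp only [unaryThetaTerm, Equiv.neg_apply, Int.cast_neg, ofReal_neg]
  rw [show -(n : ℂ) + -s = -(n + s) by ring, neg_sq]
  ring_nf

lemma unaryTheta_add_one (s t : ℝ) (τ : ℂ) : unaryTheta (s + 1) t τ = unaryTheta s t τ := by
  rw [unaryTheta_eq_tsum, unaryTheta_eq_tsum, ← (Equiv.subRight (1 : ℤ)).tsum_eq]
  refine tsum_congr fun n => ?_
  simp only [unaryThetaTerm, Equiv.subRight_apply, Int.cast_sub, Int.cast_one, ofReal_add,
    ofReal_one]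
  ring_nf

lemma unaryTheta_one_sub (s : ℝ) (τ : ℂ) : unaryTheta (1 - s) 0 τ = -unaryTheta s 0 τ := by
  rw [sub_eq_neg_add, unaryTheta_add_one, ← neg_zero, unaryTheta_neg, neg_zero]

lemma unaryTheta_zero_zero (τ : ℂ) : unaryTheta 0 0 τ = 0 := by
  have h := unaryTheta_neg 0 0 τ
  rw [neg_zero] at h
  exact self_eq_neg.mp h

lemma unaryTheta_half_zero (τ : ℂ) : unaryTheta (1 / 2) 0 τ = 0 := by
  have h := unaryTheta_one_sub (1 / 2) τ
  rw [show (1 : ℝ) - 1 / 2 = 1 / 2 by norm_num] at h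
  exact self_eq_neg.mp h

lemma unaryThetaTerm_mul_add (N : ℕ) [NeZero N] (u : ℤ) (τ : ℂ) (q : ℤ) (r : ℕ) :
    unaryThetaTerm 0 (u / N) (τ / N) (q * N + r) =
      N * (cexp (2 * π * I * u * r / N) * unaryThetaTerm (r / N) 0 (N * τ) q) := by
  have hN : (N : ℂ) ≠ 0 := Nat.cast_ne_zero.mpr (NeZero.ne N)
  simp only [unaryThetaTerm, ofReal_zero, add_zero, mul_zero, Complex.exp_zero, mul_one]
  push_cast
  have hexp : cexp (2 * π * I * (q * N + r) * (u / N)) = cexp (2 * π * I * u * r / N) := by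
    rw [show 2 * π * I * (q * N + r) * (u / N) =
        (q * u : ℤ) * (2 * π * I) + 2 * π * I * u * r / N by push_cast; field_simp,
      Complex.exp_add, Complex.exp_int_mul_two_pi_mul_I, one_mul]
  have hquad : π * I * (q * N + r) ^ 2 * (τ / N) = π * I * (q + r / N) ^ 2 * (N * τ) := by
    field_simp
  rw [hexp, hquad]
  field_simp

theorem unaryTheta_zero_div_eq_sum (N : ℕ) [NeZero N] (u : ℤ) {τ : ℂ} (hτ : 0 < τ.im) :
    unaryTheta 0 (u / N) (τ / N) =
      N * ∑ v ∈ Finset.range N,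
        cexp (2 * π * I * u * v / N) * unaryTheta (v / N) 0 (N * τ) := by
  have hτN : 0 < (τ / N).im := by
    rw [Complex.div_natCast_im]
    exact div_pos hτ (Nat.cast_pos.mpr (Nat.pos_of_neZero N))
  let e : Fin N × ℤ ≃ ℤ := ((Int.divModEquiv N).trans (Equiv.prodComm _ _)).symm
  have he : Summable fun p => unaryThetaTerm 0 (u / N) (τ / N) (e p) :=
    (summable_unaryThetaTerm _ _ hτN).comp_injective e.injective
  rw [unaryTheta_eq_tsum, ← e.tsum_eq, he.tsum_prod' he.prod_factor, tsum_fintype]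
  change ∑ r : Fin N, ∑' q : ℤ, unaryThetaTerm 0 (u / N) (τ / N) (q * N + r) = _
  rw [Fin.sum_univ_eq_sum_range
    (fun r => ∑' q : ℤ, unaryThetaTerm 0 (u / N) (τ / N) (q * N + r)), Finset.mul_sum]
  refine Finset.sum_congr rfl fun r _ => ?_
  simp_rw [unaryTheta_eq_tsum, ← tsum_mul_left, unaryThetaTerm_mul_add]

theorem Finset.sum_range_two_mul_eq_sum_Ico_add_sub {β : Type*} [AddCommMonoid β] (f : ℕ → β)
    (M : ℕ) (h0 : f 0 = 0) (hM : f M = 0) :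
    ∑ v ∈ range (2 * M), f v = ∑ v ∈ Ico 1 M, (f v + f (2 * M - v)) := by
  rcases M.eq_zero_or_pos with rfl | hpos
  · simp
  have hreflect := sum_Ico_reflect f 1 (m := M) (n := 2 * M) (by omega)
  rw [show 2 * M + 1 - M = M + 1 by omega, show 2 * M + 1 - 1 = 2 * M by omega] at hreflect
  rw [range_eq_Ico, ← sum_Ico_consecutive f (Nat.zero_le 1) (by omega : 1 ≤ 2 * M),
    ← sum_Ico_consecutive f hpos (by omega : M ≤ 2 * M),
    ← sum_Ico_consecutive f M.le_succ (by omega : M + 1 ≤ 2 * M),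
    Nat.Ico_succ_singleton, Nat.Ico_succ_singleton, sum_singleton, sum_singleton, h0, hM,
    ← hreflect, sum_add_distrib]
  simp

lemma exp_mul_unaryTheta_add_reflect (N : ℕ) [NeZero N] (u : ℤ) (τ : ℂ) {v : ℕ}
    (hv : v ≤ N) :
    cexp (2 * π * I * u * v / N) * unaryTheta (v / N) 0 τ +
      cexp (2 * π * I * u * (N - v : ℕ) / N) * unaryTheta ((N - v : ℕ) / N) 0 τ =
      2 * I * (Real.sin (2 * π * u * v / N) : ℂ) * unaryTheta (v / N) 0 τ := by
  have hN : (N : ℂ) ≠ 0 := Nat.cast_ne_zero.mpr (NeZero.ne N)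
  have hNr : (N : ℝ) ≠ 0 := Nat.cast_ne_zero.mpr (NeZero.ne N)
  set θ : ℂ := ((2 * π * u * v / N : ℝ) : ℂ)
  have hθ : 2 * π * I * u * v / N = θ * I := by simp only [θ]; push_cast; ring
  have hθ' : 2 * π * I * u * (N - v : ℕ) / N = u * (2 * π * I) + -(θ * I) := by
    simp only [θ]; push_cast [Nat.cast_sub hv]; field_simp; ring
  have hs : (((N - v : ℕ) : ℝ) / N) = 1 - v / N := by
    push_cast [Nat.cast_sub hv]; field_simp
  rw [hθ, hθ', Complex.exp_add, Complex.exp_int_mul_two_pi_mul_I, one_mul, hs,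
    unaryTheta_one_sub, ← neg_mul, Complex.exp_mul_I, Complex.exp_mul_I, Complex.cos_neg,
    Complex.sin_neg, ofReal_sin]
  ring

theorem sum_range_two_mul_exp_mul_unaryTheta_eq_sin (M : ℕ) [NeZero M] (u : ℤ) (τ : ℂ) :
    ∑ v ∈ Finset.range (2 * M),
        cexp (2 * π * I * u * v / (2 * M : ℕ)) * unaryTheta (v / (2 * M : ℕ)) 0 τ =
      2 * I * ∑ v ∈ Finset.Icc 1 (M - 1),
        (Real.sin (π * u * v / M) : ℂ) * unaryTheta (v / (2 * M : ℕ)) 0 τ := by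
  have hM : (M : ℝ) ≠ 0 := Nat.cast_ne_zero.mpr (NeZero.ne M)
  have hmid : ((M : ℕ) : ℝ) / (2 * M : ℕ) = 1 / 2 := by push_cast; field_simp
  rw [Finset.sum_range_two_mul_eq_sum_Ico_add_sub _ M (by simp [unaryTheta_zero_zero])
    (by rw [hmid, unaryTheta_half_zero, mul_zero]),
    ← Finset.Icc_sub_one_right_eq_Ico_of_not_isMin (by simpa using NeZero.ne M), Finset.mul_sum]
  refine Finset.sum_congr rfl fun v hv => ?_
  rw [exp_mul_unaryTheta_add_reflect _ _ _ (by rw [Finset.mem_Icc] at hv; omega)]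
  push_cast
  rw [show (2 * π * u * v / (2 * M) : ℂ) = π * u * v / M by field_simp]
  ring

/-- For `u ∈ ℤ` and `τ ∈ ℍ`:
`g_{0,u/20}(τ/20) = 20 Σ_{v=0}^{19} ζ₂₀^{uv} g_{v/20,0}(20τ)
                  = 40i Σ_{v=1}^{9} sin(πuv/10) g_{v/20,0}(20τ)`. -/
theorem stmt11 (u : ℤ) (τ : ℂ) (hτ : 0 < τ.im) :
    unaryTheta 0 ((u : ℝ)/20) (τ/20)
      = 20 * ∑ v ∈ Finset.range 20,
          Complex.exp (2 * Real.pi * Complex.I * u * v / 20) *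
            unaryTheta ((v : ℝ)/20) 0 (20 * τ) ∧
    unaryTheta 0 ((u : ℝ)/20) (τ/20)
      = 40 * Complex.I * ∑ v ∈ Finset.Icc (1:ℕ) 9,
          (Real.sin (Real.pi * u * v / 10) : ℂ) *
            unaryTheta ((v : ℝ)/20) 0 (20 * τ) := by
  have hdecomp := unaryTheta_zero_div_eq_sum 20 u hτ
  have hpair := sum_range_two_mul_exp_mul_unaryTheta_eq_sin 10 u (20 * τ)
  simp only [Nat.cast_ofNat, Nat.reduceMul, Nat.reduceSub] at hdecomp hpair
  refine ⟨hdecomp, hdecomp.trans ?_⟩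
  rw [hpair]
  ring
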